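/- For every t ∈ ℂ with t ≠ 0, the bracket on ℂ⁴ defined by [e₁,e₁] = t·e₃, [e₁,e₂] = e₄, [e₂,e₁] = e₄, [e₂,e₂] = e₃ (the deformation of the metric Leibniz algebra ℜ₂₀(0) along the 2-cocycle φ(e₁,e₁) = e₃) is isomorphic to the Leibniz algebra μ₁ ⊕ μ₁ on ℂ⁴ with bracket [e₁,e₁] = e₂, [e₃,e₃] = e₄. -/
import Mathlib


/-- The deformation of `ℜ₂₀(0)` on `ℂ⁴` along the 2-cocycle `φ(e₁,e₁) = e₃`:
the brackets `[e₁,e₁] = t·e₃`, `[e₁,e₂] = e₄`, `[e₂,e₁] = e₄`, `[e₂,e₂] = e₃`,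
in coordinates. -/
def R20Deformed (t : ℂ) (x y : Fin 4 → ℂ) : Fin 4 → ℂ :=
  ![0, 0, t * (x 0 * y 0) + x 1 * y 1, x 0 * y 1 + x 1 * y 0]

/-- The bracket of `μ₁ ⊕ μ₁` on `ℂ⁴`: `[e₁,e₁] = e₂`, `[e₃,e₃] = e₄`,
in coordinates. -/
def mu1PlusMu1 (x y : Fin 4 → ℂ) : Fin 4 → ℂ := ![0, x 0 * y 0, 0, x 2 * y 2]

/-- The forward linear map of the isomorphism. -/
def Tfwd (s : ℂ) : (Fin 4 → ℂ) →ₗ[ℂ] (Fin 4 → ℂ) where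
  toFun x := ![s * x 0 + x 1, x 2 + s * x 3, s * x 0 - x 1, x 2 - s * x 3]
  map_add' x y := by
    funext i
    fin_cases i <;> simp [Pi.add_apply] <;> ring
  map_smul' c x := by
    funext i
    fin_cases i <;> simp [Pi.smul_apply, smul_eq_mul] <;> ring

/-- The inverse linear map of the isomorphism. -/
noncomputable def Tbwd (s : ℂ) : (Fin 4 → ℂ) →ₗ[ℂ] (Fin 4 → ℂ) where
  toFun y := ![(y 0 + y 2) / (2 * s), (y 0 - y 2) / 2, (y 1 + y 3) / 2,
    (y 1 - y 3) / (2 * s)]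
  map_add' x y := by
    funext i
    fin_cases i <;> simp [Pi.add_apply] <;> ring
  map_smul' c x := by
    funext i
    fin_cases i <;> simp [Pi.smul_apply, smul_eq_mul] <;> ring

/-- For every `t ≠ 0`, the deformation of the metric Leibniz algebra `ℜ₂₀(0)`
along the 2-cocycle `φ(e₁,e₁) = e₃` is isomorphic to `μ₁ ⊕ μ₁`. -/
theorem R20_deformation_iso_mu1_plus_mu1 :
    ∀ t : ℂ, t ≠ 0 →
      ∃ T : (Fin 4 → ℂ) ≃ₗ[ℂ] (Fin 4 → ℂ),
        ∀ x y : Fin 4 → ℂ, T (R20Deformed t x y) = mu1PlusMu1 (T x) (T y) := by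
  intro t ht
  obtain ⟨s, hs⟩ : ∃ s : ℂ, s ^ 2 = t := IsAlgClosed.exists_pow_nat_eq t two_pos
  have hs0 : s ≠ 0 := by
    intro h; apply ht; rw [← hs, h]; ring
  refine ⟨LinearEquiv.ofLinear (Tfwd s) (Tbwd s) ?_ ?_, ?_⟩
  · ext y i
    fin_cases i <;>
      simp [Tfwd, Tbwd] <;> field_simp <;> ring
  · ext x i
    fin_cases i <;>
      simp [Tfwd, Tbwd] <;> field_simp <;> ring
  · intro x y
    funext i
    have hst : s * s = t := by rw [← hs]; ring
    fin_cases i <;>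
      simp [Tfwd, Tbwd, R20Deformed, mu1PlusMu1, LinearEquiv.ofLinear_apply, ← hst] <;> ring
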